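/- For n ≥ 1, the n-th Bernoulli number satisfies B_n/n! = Σ_{π∈C(n)} (-1)^{|π|} / ((|π|+1)·π!), where π! = k_1!···k_m! for π = (k_1,...,k_m). -/

import Mathlib

open Finset Nat

namespace BernoulliCompAux

open PowerSeries

noncomputable def E : PowerSeries ℚ := PowerSeries.exp ℚ - 1

noncomputable def e (k : ℕ) : ℚ := if k = 0 then 0 else ((k ! : ℚ))⁻¹

lemma coeff_E (k : ℕ) : PowerSeries.coeff (R := ℚ) k E = e k := by
  simp only [E, map_sub, PowerSeries.coeff_exp, PowerSeries.coeff_one, e]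
  split_ifs with h
  · subst h; simp
  · simp

noncomputable def Wl : ℕ → ℕ → ℚ
  | 0, n => if n = 0 then 1 else 0
  | (m+1), n => ∑ p ∈ antidiagonal n, Wl m p.1 * e p.2

lemma coeff_E_pow (m : ℕ) : ∀ n, PowerSeries.coeff (R := ℚ) n (E ^ m) = Wl m n := by
  induction m with
  | zero => intro n; simp [Wl, PowerSeries.coeff_one]
  | succ m ih =>
    intro n
    rw [pow_succ, PowerSeries.coeff_mul]
    simp [Wl, ih, coeff_E]

def πfac (l : List ℕ) : ℚ := (l.map fun k => (k ! : ℚ)).prod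

noncomputable def F (n m : ℕ) : Finset (Composition n) :=
  univ.filter (fun π => π.length = m)

noncomputable def app (n : ℕ) (x : (p : ℕ × ℕ) × Composition p.1) : Composition n :=
  if h : x.1.2 ≠ 0 ∧ x.1.1 + x.1.2 = n then
    ⟨x.2.blocks ++ [x.1.2], by
       intro i hi
       rcases List.mem_append.1 hi with h1 | h1
       · exact x.2.blocks_pos h1
       · rw [List.mem_singleton.1 h1]; exact Nat.pos_of_ne_zero h.1,
     by rw [List.sum_append, x.2.blocks_sum, List.sum_singleton]; exact h.2⟩
  else Composition.ones n

noncomputable def spl (n : ℕ) (σ : Composition n) : (p : ℕ × ℕ) × Composition p.1 :=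
  if h : σ.blocks ≠ [] then
    ⟨(σ.blocks.dropLast.sum, σ.blocks.getLast h),
     ⟨σ.blocks.dropLast, fun hi => σ.blocks_pos (List.dropLast_subset _ hi), rfl⟩⟩
  else ⟨(n, 0), Composition.ones n⟩

lemma sigma_comp_ext {x y : (p : ℕ × ℕ) × Composition p.1} (h1 : x.1 = y.1)
    (h2 : x.2.blocks = y.2.blocks) : x = y := by
  obtain ⟨p, c⟩ := x; obtain ⟨q, d⟩ := y
  cases h1
  simp only [Sigma.mk.inj_iff, heq_eq_eq, true_and]
  exact Composition.ext h2

lemma comp_sum (m : ℕ) : ∀ n, ∑ π ∈ F n m, (πfac π.blocks)⁻¹ = Wl m n := by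
  induction m with
  | zero =>
    intro n
    cases n with
    | zero =>
      have huniv : F 0 0 = univ := by
        apply Finset.filter_true_of_mem
        intro π _
        exact Nat.le_zero.1 π.length_le
      rw [huniv, Wl]
      have hterm : ∀ π : Composition 0, (πfac π.blocks)⁻¹ = 1 := by
        intro π
        have : π.blocks = [] := by
          have := π.length_le
          simpa [Composition.length, List.length_eq_zero_iff] using Nat.le_zero.1 this
        simp [πfac, this]
      rw [Finset.sum_congr rfl (fun π _ => hterm π), Finset.sum_const, Finset.card_univ,
        composition_card]
      simp
    | succ k =>
      have : F (k+1) 0 = ∅ := by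
        apply Finset.filter_eq_empty_iff.2
        intro π _
        have := π.length_pos_of_pos (Nat.succ_pos k); omega
      rw [this, Wl]
      simp
  | succ m ih =>
    intro n
    rw [Wl]
    have step1 : ∀ p ∈ antidiagonal n, Wl m p.1 * e p.2 =
        ∑ π ∈ F p.1 m, (πfac π.blocks)⁻¹ * e p.2 := by
      intro p _
      rw [← ih p.1, Finset.sum_mul]
    rw [Finset.sum_congr rfl step1]
    rw [show ∑ p ∈ antidiagonal n, ∑ π ∈ F p.1 m, (πfac π.blocks)⁻¹ * e p.2 =
        ∑ p ∈ (antidiagonal n).filter (fun p => p.2 ≠ 0), ∑ π ∈ F p.1 m,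
          (πfac π.blocks)⁻¹ * e p.2 from
      (Finset.sum_subset (Finset.filter_subset _ _) (by
        intro p hp hnp
        have hp2 : p.2 = 0 := by
          by_contra h
          exact hnp (Finset.mem_filter.2 ⟨hp, h⟩)
        simp [hp2, e])).symm]
    rw [Finset.sum_sigma']
    symm
    apply Finset.sum_nbij' (i := fun x => app n x) (j := fun σ => spl n σ)
    · intro x hx
      rw [Finset.mem_sigma] at hx
      obtain ⟨hx1, hx2⟩ := hx
      rw [Finset.mem_filter] at hx1
      have hadd : x.1.1 + x.1.2 = n := Finset.HasAntidiagonal.mem_antidiagonal.1 hx1.1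
      have hcond : x.1.2 ≠ 0 ∧ x.1.1 + x.1.2 = n := ⟨hx1.2, hadd⟩
      rw [F, Finset.mem_filter]
      refine ⟨Finset.mem_univ _, ?_⟩
      rw [app, dif_pos hcond]
      have hlen : x.2.length = m := (Finset.mem_filter.1 hx2).2
      simp [Composition.length, hlen]
    · intro σ hσ
      have hlen : σ.length = m + 1 := (Finset.mem_filter.1 hσ).2
      have hne : σ.blocks ≠ [] := by
        intro h
        rw [Composition.length, h] at hlen
        simp at hlen
      rw [spl, dif_pos hne, Finset.mem_sigma]
      constructor
      · rw [Finset.mem_filter]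
        constructor
        · rw [Finset.HasAntidiagonal.mem_antidiagonal]
          conv_rhs => rw [← σ.blocks_sum, ← List.dropLast_append_getLast hne]
          rw [List.sum_append, List.sum_singleton]
        · have := σ.blocks_pos (List.getLast_mem hne)
          simpa using this.ne'
      · rw [F, Finset.mem_filter]
        refine ⟨Finset.mem_univ _, ?_⟩
        simp only [Composition.length, List.length_dropLast]
        rw [Composition.length] at hlen
        omega
    · intro x hx
      rw [Finset.mem_sigma] at hx
      obtain ⟨hx1, hx2⟩ := hx
      rw [Finset.mem_filter] at hx1
      have hcond : x.1.2 ≠ 0 ∧ x.1.1 + x.1.2 = n :=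
        ⟨hx1.2, Finset.HasAntidiagonal.mem_antidiagonal.1 hx1.1⟩
      rw [app, dif_pos hcond, spl]
      have hne : x.2.blocks ++ [x.1.2] ≠ [] := by simp
      rw [dif_pos hne]
      apply sigma_comp_ext
      · simp only [List.dropLast_concat, List.getLast_append_singleton]
        rw [x.2.blocks_sum]
      · simp [List.dropLast_concat]
    · intro σ hσ
      have hlen : σ.length = m + 1 := (Finset.mem_filter.1 hσ).2
      have hne : σ.blocks ≠ [] := by
        intro h
        rw [Composition.length, h] at hlen
        simp at hlen
      rw [spl, dif_pos hne]
      have hcond : σ.blocks.getLast hne ≠ 0 ∧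
          σ.blocks.dropLast.sum + σ.blocks.getLast hne = n := by
        constructor
        · have := σ.blocks_pos (List.getLast_mem hne); omega
        · conv_rhs => rw [← σ.blocks_sum]
          conv_rhs => rw [← List.dropLast_append_getLast hne]
          rw [List.sum_append, List.sum_singleton]
      rw [app, dif_pos hcond]
      apply Composition.ext
      simp [List.dropLast_append_getLast hne]
    · intro x hx
      rw [Finset.mem_sigma] at hx
      obtain ⟨hx1, hx2⟩ := hx
      rw [Finset.mem_filter] at hx1
      have hcond : x.1.2 ≠ 0 ∧ x.1.1 + x.1.2 = n :=
        ⟨hx1.2, Finset.HasAntidiagonal.mem_antidiagonal.1 hx1.1⟩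
      rw [app, dif_pos hcond]
      simp only [e, if_neg hcond.1]
      rw [show πfac (x.2.blocks ++ [x.1.2]) = πfac x.2.blocks * ((x.1.2)! : ℚ) by
        rw [πfac, πfac, List.map_append, List.prod_append]; simp]
      rw [mul_inv]

lemma Wl_zero {m n : ℕ} (h : n < m) : Wl m n = 0 := by
  rw [← comp_sum]
  apply Finset.sum_eq_zero
  intro π hπ
  have h1 : π.length = m := (Finset.mem_filter.1 hπ).2
  have h2 := π.length_le
  omega

lemma derivative_exp' : d⁄dX ℚ (PowerSeries.exp ℚ) = PowerSeries.exp ℚ := by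
  ext n
  rw [PowerSeries.coeff_derivative]
  simp only [PowerSeries.coeff_exp, Algebra.algebraMap_self, RingHom.id_apply]
  rw [factorial_succ]
  push_cast
  have h1 : (n ! : ℚ) ≠ 0 := by exact_mod_cast (Nat.factorial_ne_zero n)
  have h2 : ((n : ℚ) + 1) ≠ 0 := by positivity
  field_simp

lemma derivative_E : d⁄dX ℚ E = PowerSeries.exp ℚ := by
  rw [E, map_sub, derivative_exp']
  simp

noncomputable def G (N : ℕ) : PowerSeries ℚ :=
  ∑ m ∈ range (N+1), PowerSeries.C (R := ℚ) ((-1)^m / (m+1)) * E^(m+1)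

lemma derivative_G (N : ℕ) : d⁄dX ℚ (G N) = 1 - (-E)^(N+1) := by
  have h1 : d⁄dX ℚ (G N) =
      ∑ m ∈ range (N+1), PowerSeries.C (R := ℚ) ((-1)^m) * (E^m * PowerSeries.exp ℚ) := by
    rw [G, map_sum]
    apply Finset.sum_congr rfl
    intro m _
    rw [Derivation.leibniz, Derivation.leibniz_pow, derivative_E]
    have h2 : ((m+1:ℚ)) ≠ 0 := by positivity
    simp only [PowerSeries.derivative_C, smul_zero, mul_zero, add_zero, smul_eq_mul, nsmul_eq_mul,
      Nat.add_sub_cancel]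
    rw [← map_natCast (PowerSeries.C (R := ℚ)) (m+1), ← mul_assoc, ← map_mul]
    congr 2
    push_cast
    field_simp
  rw [h1]
  have h4 : PowerSeries.exp ℚ = 1 + E := by rw [E]; ring
  have h2 : ∑ m ∈ range (N+1), PowerSeries.C (R := ℚ) ((-1)^m) * (E^m * PowerSeries.exp ℚ)
      = (∑ m ∈ range (N+1), (-E)^m) * PowerSeries.exp ℚ := by
    rw [Finset.sum_mul]
    apply Finset.sum_congr rfl
    intro m _
    have hC : PowerSeries.C (R := ℚ) ((-1:ℚ)^m) = (-1 : ℚ⟦X⟧)^m := by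
      rw [map_pow, map_neg, map_one]
    rw [hC, neg_pow]
    ring
  rw [h2, h4]
  linear_combination -geom_sum_mul (-E) (N+1)

lemma coeff_G (N n : ℕ) : PowerSeries.coeff (R := ℚ) n (G N) =
    ∑ m ∈ range (N+1), ((-1:ℚ)^m / (m+1)) * Wl (m+1) n := by
  rw [G, map_sum]
  apply Finset.sum_congr rfl
  intro m _
  rw [PowerSeries.coeff_C_mul, coeff_E_pow]

lemma coeff_G_eval (N : ℕ) (hN : 1 ≤ N) :
    PowerSeries.coeff (R := ℚ) N (G N) = if N = 1 then 1 else 0 := by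
  have hD := congrArg (PowerSeries.coeff (R := ℚ) (N-1)) (derivative_G N)
  rw [PowerSeries.coeff_derivative] at hD
  have hN1 : N - 1 + 1 = N := by omega
  rw [hN1] at hD
  have hE : PowerSeries.coeff (R := ℚ) (N-1) ((-E)^(N+1)) = 0 := by
    rw [neg_pow]
    have hC : ((-1 : ℚ⟦X⟧))^(N+1) = PowerSeries.C (R := ℚ) ((-1:ℚ)^(N+1)) := by
      rw [map_pow, map_neg, map_one]
    rw [hC, PowerSeries.coeff_C_mul, coeff_E_pow, Wl_zero (by omega), mul_zero]
  rw [map_sub, hE, PowerSeries.coeff_one, sub_zero] at hD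
  have hcast : ((N - 1 : ℕ) : ℚ) + 1 = (N : ℚ) := by
    rw [Nat.cast_sub hN]; push_cast; ring
  rw [hcast] at hD
  by_cases h1 : N = 1
  · subst h1
    simpa using hD
  · have hiff : ¬ (N - 1 = 0) := by omega
    rw [if_neg hiff] at hD
    rw [if_neg h1]
    have hNne : (N : ℚ) ≠ 0 := by
      exact_mod_cast Nat.pos_iff_ne_zero.1 (by omega)
    exact (mul_eq_zero.1 hD).resolve_right hNne

noncomputable def S (n : ℕ) : ℚ := ∑ m ∈ range (n+1), ((-1:ℚ)^m / (m+1)) * Wl m n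

lemma mk_S_mul_E : PowerSeries.mk S * E = PowerSeries.X := by
  ext N
  rw [PowerSeries.coeff_mul, PowerSeries.coeff_X]
  have hstep : ∀ p ∈ antidiagonal N,
      PowerSeries.coeff (R := ℚ) p.1 (PowerSeries.mk S) * PowerSeries.coeff (R := ℚ) p.2 E =
        ∑ m ∈ range (N+1), ((-1:ℚ)^m / (m+1)) * Wl m p.1 * e p.2 := by
    intro p hp
    have hp1 : p.1 ≤ N := by
      have := Finset.HasAntidiagonal.mem_antidiagonal.1 hp; omega
    rw [PowerSeries.coeff_mk, coeff_E, S]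
    rw [show ∑ m ∈ range (p.1+1), ((-1:ℚ)^m / (m+1)) * Wl m p.1 =
        ∑ m ∈ range (N+1), ((-1:ℚ)^m / (m+1)) * Wl m p.1 from
      Finset.sum_subset (by apply Finset.range_subset_range.2; omega) (by
        intro m hm hnm
        rw [Finset.mem_range] at hm
        rw [Finset.mem_range] at hnm
        rw [Wl_zero (by omega), mul_zero])]
    rw [Finset.sum_mul]
  rw [Finset.sum_congr rfl hstep, Finset.sum_comm]
  have hswap : ∀ m ∈ range (N+1),
      ∑ p ∈ antidiagonal N, ((-1:ℚ)^m / (m+1)) * Wl m p.1 * e p.2 =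
        ((-1:ℚ)^m / (m+1)) * Wl (m+1) N := by
    intro m _
    rw [show (Wl (m+1) N) = ∑ p ∈ antidiagonal N, Wl m p.1 * e p.2 from rfl, Finset.mul_sum]
    apply Finset.sum_congr rfl
    intro p _
    ring
  rw [Finset.sum_congr rfl hswap, ← coeff_G]
  cases N with
  | zero =>
    rw [coeff_G]
    simp only [zero_add, range_one, Finset.sum_singleton, pow_zero, Nat.cast_zero]
    rw [show Wl 1 0 = ∑ p ∈ antidiagonal 0, Wl 0 p.1 * e p.2 from rfl]
    simp [e]
  | succ k =>
    rw [coeff_G_eval (k+1) (by omega)]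

lemma mk_S_eq : PowerSeries.mk S = bernoulliPowerSeries ℚ := by
  have hB := bernoulliPowerSeries_mul_exp_sub_one ℚ
  have hEne : E ≠ 0 := by
    intro h
    have h1 := coeff_E 1
    rw [h] at h1
    simp [e] at h1
  apply mul_right_cancel₀ hEne
  rw [mk_S_mul_E, ← hB, E]

lemma bernoulli_eq_S (n : ℕ) : bernoulli n / (n ! : ℚ) = S n := by
  have := congrArg (PowerSeries.coeff (R := ℚ) n) mk_S_eq
  rw [PowerSeries.coeff_mk] at this
  rw [this, bernoulliPowerSeries, PowerSeries.coeff_mk]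
  simp

end BernoulliCompAux

open BernoulliCompAux in
/-- `Bₙ/n! = ∑_{π ∈ C(n)} (-1)^{|π|} / ((|π|+1)·π!)` where `π! = ∏ᵢ kᵢ!`. -/
theorem bernoulli_second_sum_over_compositions :
    ∀ n : ℕ, 1 ≤ n →
      bernoulli n / (n ! : ℚ) =
        ∑ π : Composition n,
          (-1 : ℚ) ^ π.length /
            ((π.length + 1) * (π.blocks.map fun k => (k ! : ℚ)).prod) := by
  intro n hn
  rw [bernoulli_eq_S]
  rw [show (∑ π : Composition n, (-1 : ℚ) ^ π.length /
        ((π.length + 1) * (π.blocks.map fun k => (k ! : ℚ)).prod)) =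
      ∑ m ∈ range (n+1), ∑ π ∈ F n m, (-1 : ℚ) ^ π.length /
        ((π.length + 1) * πfac π.blocks) from
    (Finset.sum_fiberwise_of_maps_to
      (fun π _ => Finset.mem_range.2 (Nat.lt_succ_of_le π.length_le)) _).symm]
  rw [S]
  apply Finset.sum_congr rfl
  intro m _
  rw [← comp_sum, Finset.mul_sum]
  apply Finset.sum_congr rfl
  intro π hπ
  have hl : π.length = m := (Finset.mem_filter.1 hπ).2
  rw [hl, div_mul_eq_div_div, div_eq_mul_inv]
  rfl
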